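/- arXiv:2604.13916 — 2 statements merged into one kernel-verified Lean document; each statement's English description precedes it below -/
import Mathlib

section
/- Let C be a ℤ≥0-filtered algebra over a field k such that d(ab) = d(a) + d(b) for all nonzero a, b ∈ C (where d denotes the filtration degree). If for every n the k-vector space Gr(C)_n = C_n / C_{n-1} is 0- or 1-dimensional, then C is commutative. -/
/-!
Write `⁅x, y⁆ = xy - yx` and extend the filtration by `0` to negative indices. By induction on `N`,
commutators drop `N` steps: `⁅F_i, F_j⁆ ⊆ F_{i+j-N}`; for `N > d(a) + d(b)` this gives
`⁅a, b⁆ = 0`.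

Additivity of `d` makes `C` a domain with `d(a^p) = p d(a)`. Given `a, b` of degrees `m, n`, pick
coprime `p, q` with `pm = qn`. Then `a^p` and `b^q` have the same degree, and since the pieces of
`Gr` are at most one-dimensional, `a^p` is a multiple of `b^q` modulo lower degree. As `b^q`
commutes with `b`, the commutator `⁅a^p, b⁆` lies one step deeper than the inductive hypothesis
predicts, and likewise `⁅b^q, a⁆`.
* `N = 1`: `ab ≡ c ba` for a scalar `c`, hence `a^p b ≡ c^p b a^p`, which forces `c^p = 1`.
  Likewise `c^{-q} = 1`, so `c = 1`.
* `N → N + 1`: modulo the next step, `⁅a^p, b⁆ ≡ p a^{p-1} ⁅a, b⁆`. Cancelling `a^{p-1}`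
  shows that `p ⁅a, b⁆` drops one more step, and so does `q ⁅a, b⁆`; Bézout concludes.
-/

/-- The degree of an element with respect to a filtration: the least index `i`
with `a ∈ F i`. -/
noncomputable def fdeg {k C : Type*} [Field k] [Ring C] [Algebra k C]
    (F : ℕ → Submodule k C) (a : C) : ℕ := sInf {i | a ∈ F i}

section

variable {k C : Type*} [Field k] [Ring C] [Algebra k C]

lemma exists_sub_smul_mem_of_rank_quotient_le_one {V : Type*} [AddCommGroup V] [Module k V]
    {P : Submodule k V} (h : Module.rank k (V ⧸ P) ≤ 1) (x : V) {y : V} (hy : y ∉ P) :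
    ∃ c : k, x - c • y ∈ P := by
  obtain ⟨v, hv⟩ := rank_le_one_iff.mp h
  obtain ⟨r, hr⟩ := hv (P.mkQ x)
  obtain ⟨s, hs⟩ := hv (P.mkQ y)
  have hs0 : s ≠ 0 := by
    rintro rfl
    rw [zero_smul, eq_comm, Submodule.mkQ_apply, Submodule.Quotient.mk_eq_zero] at hs
    exact hy hs
  refine ⟨r / s, ?_⟩
  rw [← Submodule.Quotient.mk_eq_zero, Submodule.Quotient.mk_sub, Submodule.Quotient.mk_smul]
  rw [Submodule.mkQ_apply] at hr hs
  rw [← hr, ← hs, smul_smul, div_mul_cancel₀ r hs0, sub_self]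

lemma exists_coprime_mul_eq_mul (m n : ℕ) : ∃ p q : ℕ, p.Coprime q ∧ p * m = q * n := by
  obtain ⟨m', n', hcop, hm, hn⟩ := Nat.exists_coprime m n
  generalize m.gcd n = g at hm hn
  exact ⟨n', m', hcop.symm, by rw [hm, hn]; ring⟩

lemma mem_of_nsmul_mem_of_coprime {G S : Type*} [AddCommGroup G] [SetLike S G]
    [AddSubgroupClass S G] {P : S} {x : G} {p q : ℕ} (hpq : p.Coprime q) (hp : p • x ∈ P)
    (hq : q • x ∈ P) : x ∈ P := by
  obtain ⟨u, v, huv⟩ := Nat.Coprime.isCoprime hpq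
  have hx : x = u • p • x + v • q • x := by
    rw [← natCast_zsmul, ← natCast_zsmul, smul_smul, smul_smul, ← add_smul, huv, one_smul]
  rw [hx]
  exact add_mem (zsmul_mem hp u) (zsmul_mem hq v)

/-- The filtration extended by `⊥` to negative indices, so that degree bounds such as
`i + j - N` can be stated without truncated subtraction. -/
noncomputable def intFilt (F : ℕ → Submodule k C) (z : ℤ) : Submodule k C :=
  if 0 ≤ z then F z.toNat else ⊥

variable {F : ℕ → Submodule k C}

@[simp]
lemma intFilt_natCast (n : ℕ) : intFilt F n = F n := by simp [intFilt]

lemma intFilt_of_neg {z : ℤ} (hz : z < 0) : intFilt F z = ⊥ := by simp [intFilt, hz.not_ge]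

lemma fdeg_le_of_mem {x : C} {i : ℕ} (hx : x ∈ F i) : fdeg F x ≤ i := Nat.sInf_le hx

lemma fdeg_zero : fdeg F (0 : C) = 0 := Nat.le_zero.mp (fdeg_le_of_mem (zero_mem _))

def FdegAdditive (F : ℕ → Submodule k C) : Prop :=
  ∀ a b : C, a ≠ 0 → b ≠ 0 → fdeg F (a * b) = fdeg F a + fdeg F b

structure IsAlgebraFiltration (F : ℕ → Submodule k C) : Prop where
  mono : Monotone F
  one_mem : (1 : C) ∈ F 0
  mul_mem : ∀ i j : ℕ, ∀ a ∈ F i, ∀ b ∈ F j, a * b ∈ F (i + j)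
  exhaustive : ∀ a : C, ∃ i, a ∈ F i

namespace IsAlgebraFiltration

lemma intFilt_mono (hF : IsAlgebraFiltration F) {i j : ℤ} (h : i ≤ j) :
    intFilt F i ≤ intFilt F j := by
  rcases lt_or_ge i 0 with hi | hi
  · simp [intFilt_of_neg hi]
  · lift i to ℕ using hi
    lift j to ℕ using (Int.natCast_nonneg i).trans h
    simpa using hF.mono (by omega)

lemma mul_mem_intFilt (hF : IsAlgebraFiltration F) {x y : C} {i j : ℤ}
    (hx : x ∈ intFilt F i) (hy : y ∈ intFilt F j) : x * y ∈ intFilt F (i + j) := by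
  rcases lt_or_ge i 0 with hi | hi
  · simp_all [intFilt_of_neg hi]
  rcases lt_or_ge j 0 with hj | hj
  · simp_all [intFilt_of_neg hj]
  lift i to ℕ using hi
  lift j to ℕ using hj
  rw [← Nat.cast_add, intFilt_natCast]
  exact hF.mul_mem i j x (by simpa using hx) y (by simpa using hy)

lemma pow_mem_intFilt (hF : IsAlgebraFiltration F) {x : C} {i : ℤ} (hx : x ∈ intFilt F i)
    (p : ℕ) : x ^ p ∈ intFilt F (p * i) := by
  induction p with
  | zero =>
    rw [pow_zero, Nat.cast_zero, zero_mul, ← Nat.cast_zero, intFilt_natCast]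
    exact hF.one_mem
  | succ p ih => simpa [pow_succ, add_mul] using hF.mul_mem_intFilt ih hx

lemma mem_fdeg (hF : IsAlgebraFiltration F) (x : C) : x ∈ F (fdeg F x) :=
  Nat.sInf_mem (hF.exhaustive x)

lemma mem_intFilt_fdeg (hF : IsAlgebraFiltration F) (x : C) : x ∈ intFilt F (fdeg F x) := by
  simpa using hF.mem_fdeg x

lemma fdeg_one (hF : IsAlgebraFiltration F) : fdeg F (1 : C) = 0 :=
  Nat.le_zero.mp (fdeg_le_of_mem hF.one_mem)

lemma mem_intFilt_iff (hF : IsAlgebraFiltration F) {x : C} (hx : x ≠ 0) {z : ℤ} :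
    x ∈ intFilt F z ↔ (fdeg F x : ℤ) ≤ z := by
  refine ⟨fun h => ?_, fun h => hF.intFilt_mono h (hF.mem_intFilt_fdeg x)⟩
  rcases lt_or_ge z 0 with hz | hz
  · simp [intFilt_of_neg hz, hx] at h
  · lift z to ℕ using hz
    exact_mod_cast fdeg_le_of_mem (by simpa using h)

lemma eq_zero_of_smul_mem_intFilt (hF : IsAlgebraFiltration F) {x : C} (hx : x ≠ 0) {c : k}
    {z : ℤ} (h : c • x ∈ intFilt F z) (hz : z < fdeg F x) : c = 0 := by
  by_contra hc
  have hx' : x ∈ intFilt F z := by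
    simpa [smul_smul, inv_mul_cancel₀ hc] using Submodule.smul_mem _ c⁻¹ h
  exact hz.not_ge ((hF.mem_intFilt_iff hx).mp hx')

end IsAlgebraFiltration

def GradedRankLeOne (F : ℕ → Submodule k C) : Prop :=
  ∀ t : ℕ, Module.rank k (F t ⧸ (intFilt F (t - 1)).comap (F t).subtype) ≤ 1

lemma gradedRankLeOne_of_rank_le_one (hdim0 : Module.rank k (F 0) ≤ 1)
    (hdim : ∀ n : ℕ, Module.rank k (F (n + 1) ⧸ (F n).comap (F (n + 1)).subtype) ≤ 1) :
    GradedRankLeOne F := by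
  rintro (_ | n)
  · have hbot : (intFilt F ((0 : ℕ) - 1)).comap (F 0).subtype = ⊥ := by
      rw [intFilt_of_neg (by norm_num), Submodule.comap_bot, Submodule.ker_subtype]
    rwa [(Submodule.quotEquivOfEqBot _ hbot).rank_eq]
  · have hn : ((n + 1 : ℕ) : ℤ) - 1 = n := by push_cast; ring
    rw [hn, intFilt_natCast]
    exact hdim n

namespace GradedRankLeOne

lemma exists_sub_smul_mem (hgr : GradedRankLeOne F) {t : ℕ} {x y : C} (hx : x ∈ F t)
    (hy : y ∈ F t) (hy' : y ∉ intFilt F (t - 1)) :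
    ∃ c : k, x - c • y ∈ intFilt F (t - 1) :=
  exists_sub_smul_mem_of_rank_quotient_le_one (hgr t) ⟨x, hx⟩ (y := ⟨y, hy⟩) hy'

lemma exists_eq_smul_one [Nontrivial C] (hgr : GradedRankLeOne F) (hF : IsAlgebraFiltration F)
    {x : C} (hx : x ∈ F 0) : ∃ c : k, x = c • 1 := by
  have hbot : intFilt F ((0 : ℕ) - 1) = ⊥ := intFilt_of_neg (by norm_num)
  obtain ⟨c, hc⟩ := hgr.exists_sub_smul_mem hx hF.one_mem
    (by rw [hbot, Submodule.mem_bot]; exact one_ne_zero)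
  rw [hbot, Submodule.mem_bot, sub_eq_zero] at hc
  exact ⟨c, hc⟩

end GradedRankLeOne

lemma noZeroDivisors_of_fdegAdditive (hF : IsAlgebraFiltration F) (hgr : GradedRankLeOne F)
    (hdeg : FdegAdditive F) : NoZeroDivisors C := by
  refine ⟨fun {a b} hab => or_iff_not_and_not.mpr fun ⟨ha, hb⟩ => ?_⟩
  have : Nontrivial C := nontrivial_of_ne a 0 ha
  have hsum := hdeg a b ha hb
  rw [hab, fdeg_zero] at hsum
  obtain ⟨α, rfl⟩ := hgr.exists_eq_smul_one hF (x := a) (by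
    simpa [show fdeg F a = 0 by omega] using hF.mem_fdeg a)
  obtain ⟨β, rfl⟩ := hgr.exists_eq_smul_one hF (x := b) (by
    simpa [show fdeg F b = 0 by omega] using hF.mem_fdeg b)
  rw [smul_mul_smul_comm, one_mul, smul_eq_zero] at hab
  simp_all

lemma fdeg_pow [NoZeroDivisors C] (hF : IsAlgebraFiltration F) (hdeg : FdegAdditive F)
    {a : C} (ha : a ≠ 0) (p : ℕ) : fdeg F (a ^ p) = p * fdeg F a := by
  induction p with
  | zero => simpa using hF.fdeg_one
  | succ p ih => rw [pow_succ, hdeg _ _ (pow_ne_zero p ha) ha, ih, add_mul, one_mul]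

lemma mem_intFilt_of_mul_mem [NoZeroDivisors C] (hF : IsAlgebraFiltration F) (hdeg : FdegAdditive F)
    {a x : C} (ha : a ≠ 0) {z : ℤ} (h : a * x ∈ intFilt F (fdeg F a + z)) :
    x ∈ intFilt F z := by
  rcases eq_or_ne x 0 with rfl | hx
  · exact zero_mem _
  rw [hF.mem_intFilt_iff (mul_ne_zero ha hx), hdeg a x ha hx] at h
  rw [hF.mem_intFilt_iff hx]
  push_cast at h
  linarith

def CommutatorLowersBy (F : ℕ → Submodule k C) (N : ℕ) : Prop :=
  ∀ ⦃x y : C⦄ ⦃i j : ℤ⦄, x ∈ intFilt F i → y ∈ intFilt F j → ⁅x, y⁆ ∈ intFilt F (i + j - N)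

lemma commutatorLowersBy_zero (hF : IsAlgebraFiltration F) : CommutatorLowersBy F 0 :=
  fun _ _ i j hx hy => by
    simpa [Ring.lie_def] using
      sub_mem (hF.mul_mem_intFilt hx hy) (add_comm i j ▸ hF.mul_mem_intFilt hy hx)

lemma commutatorLowersBy_of_fdeg (hF : IsAlgebraFiltration F) {N : ℕ}
    (h : ∀ a b : C, a ≠ 0 → b ≠ 0 → ⁅a, b⁆ ∈ intFilt F (fdeg F a + fdeg F b - N)) :
    CommutatorLowersBy F N := by
  intro x y i j hx hy
  rcases eq_or_ne x 0 with rfl | hx0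
  · simp [Ring.lie_def]
  rcases eq_or_ne y 0 with rfl | hy0
  · simp [Ring.lie_def]
  rw [hF.mem_intFilt_iff hx0] at hx
  rw [hF.mem_intFilt_iff hy0] at hy
  exact hF.intFilt_mono (by omega) (h x y hx0 hy0)

/-- One-dimensionality of `Gr_t` lets `x` be replaced by a multiple of `z` modulo `F_{t-1}`. -/
lemma lie_mem_of_commute {N : ℕ} (hF : IsAlgebraFiltration F) (hgr : GradedRankLeOne F)
    (hN : CommutatorLowersBy F N) {x y z : C} {t : ℕ} {j : ℤ} (hx : x ∈ F t) (hz0 : z ≠ 0)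
    (hz : fdeg F z = t) (hzy : Commute z y) (hy : y ∈ intFilt F j) :
    ⁅x, y⁆ ∈ intFilt F (t + j - N - 1) := by
  obtain ⟨c, hc⟩ := hgr.exists_sub_smul_mem hx (hz ▸ hF.mem_fdeg z)
    (by rw [hF.mem_intFilt_iff hz0, hz]; omega)
  have hlie : ⁅x, y⁆ = ⁅x - c • z, y⁆ := by
    rw [Ring.lie_def, Ring.lie_def, sub_mul, mul_sub, smul_mul_assoc, mul_smul_comm, hzy.eq]
    abel
  rw [hlie]
  exact hF.intFilt_mono (by omega) (hN hc hy)

lemma pow_mul_sub_smul_mem (hF : IsAlgebraFiltration F) {a b : C} {i j : ℤ}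
    (ha : a ∈ intFilt F i) {c : k} (hc : a * b - c • (b * a) ∈ intFilt F (i + j - 1)) (p : ℕ) :
    a ^ p * b - c ^ p • (b * a ^ p) ∈ intFilt F (p * i + j - 1) := by
  induction p with
  | zero => simp
  | succ p ih =>
    have key : a ^ (p + 1) * b - c ^ (p + 1) • (b * a ^ (p + 1)) =
        a * (a ^ p * b - c ^ p • (b * a ^ p)) + c ^ p • ((a * b - c • (b * a)) * a ^ p) := by
      simp only [pow_succ' a, pow_succ c, mul_sub, sub_mul, smul_sub, mul_smul_comm,
        smul_mul_assoc, smul_smul, mul_assoc]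
      abel
    rw [key]
    have hlow := hF.mul_mem_intFilt hc (hF.pow_mem_intFilt ha p)
    refine add_mem (hF.intFilt_mono ?_ (hF.mul_mem_intFilt ha ih))
      (Submodule.smul_mem _ _ (hF.intFilt_mono ?_ hlow))
    all_goals push_cast; linarith

lemma pow_eq_one_of_mul_sub_smul_mem [NoZeroDivisors C] (hF : IsAlgebraFiltration F)
    (hgr : GradedRankLeOne F) (hdeg : FdegAdditive F)
    {a b : C} (ha : a ≠ 0) (hb : b ≠ 0) {c : k}
    (hc : a * b - c • (b * a) ∈ intFilt F (fdeg F a + fdeg F b - 1))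
    {p q : ℕ} (hpq : p * fdeg F a = q * fdeg F b) : c ^ p = 1 := by
  have hpow := pow_mul_sub_smul_mem hF (hF.mem_intFilt_fdeg a) hc p
  have hlie : ⁅a ^ p, b⁆ ∈ intFilt F ((p * fdeg F a : ℕ) + fdeg F b - 0 - 1) :=
    lie_mem_of_commute hF hgr (commutatorLowersBy_zero hF) (fdeg_pow hF hdeg ha p ▸ hF.mem_fdeg _)
      (pow_ne_zero q hb) (by rw [fdeg_pow hF hdeg hb, hpq]) ((Commute.refl b).pow_left q)
      (hF.mem_intFilt_fdeg b)
  have hdiff : (c ^ p - 1) • (b * a ^ p) = ⁅a ^ p, b⁆ - (a ^ p * b - c ^ p • (b * a ^ p)) := by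
    rw [Ring.lie_def, sub_smul, one_smul]
    abel
  have hmem : (c ^ p - 1) • (b * a ^ p) ∈ intFilt F (p * fdeg F a + fdeg F b - 1) := by
    rw [hdiff]
    exact sub_mem (by simpa using hlie) hpow
  have hba : b * a ^ p ≠ 0 := mul_ne_zero hb (pow_ne_zero p ha)
  refine sub_eq_zero.mp (hF.eq_zero_of_smul_mem_intFilt hba hmem ?_)
  rw [hdeg _ _ hb (pow_ne_zero p ha), fdeg_pow hF hdeg ha]
  push_cast
  linarith

theorem commutatorLowersBy_one [NoZeroDivisors C] (hF : IsAlgebraFiltration F)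
    (hgr : GradedRankLeOne F) (hdeg : FdegAdditive F) :
    CommutatorLowersBy F 1 := by
  refine commutatorLowersBy_of_fdeg hF fun a b ha hb => ?_
  have hab := hdeg a b ha hb
  have hba : fdeg F (b * a) = fdeg F a + fdeg F b := by rw [hdeg b a hb ha, add_comm]
  obtain ⟨c, hc⟩ := hgr.exists_sub_smul_mem (hab ▸ hF.mem_fdeg (a * b))
    (hba ▸ hF.mem_fdeg (b * a)) (by rw [hF.mem_intFilt_iff (mul_ne_zero hb ha), hba]; omega)
  push_cast at hc
  have hc0 : c ≠ 0 := by
    rintro rfl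
    rw [zero_smul, sub_zero, hF.mem_intFilt_iff (mul_ne_zero ha hb), hab] at hc
    push_cast at hc
    omega
  have hc' : b * a - c⁻¹ • (a * b) ∈ intFilt F (fdeg F b + fdeg F a - 1) := by
    have : b * a - c⁻¹ • (a * b) = -c⁻¹ • (a * b - c • (b * a)) := by
      rw [smul_sub, smul_smul, neg_mul, inv_mul_cancel₀ hc0, neg_smul, neg_smul, one_smul]
      abel
    rw [this, add_comm]
    exact Submodule.smul_mem _ _ hc
  obtain ⟨p, q, hcop, hpq⟩ := exists_coprime_mul_eq_mul (fdeg F a) (fdeg F b)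
  have hcp := pow_eq_one_of_mul_sub_smul_mem hF hgr hdeg ha hb hc hpq
  have hcq := pow_eq_one_of_mul_sub_smul_mem hF hgr hdeg hb ha hc' hpq.symm
  have hc1 : c = 1 := by
    have := pow_gcd_eq_one.mpr ⟨hcp, by simpa [inv_pow] using hcq⟩
    rwa [hcop.gcd_eq_one, pow_one] at this
  simpa [hc1, Ring.lie_def] using hc

lemma lie_pow_sub_nsmul_mem {N : ℕ} (hF : IsAlgebraFiltration F) (hN0 : 0 < N)
    (hN : CommutatorLowersBy F N) {a b : C} {i j : ℤ} (ha : a ∈ intFilt F i)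
    (hb : b ∈ intFilt F j) (p : ℕ) :
    ⁅a ^ (p + 1), b⁆ - (p + 1) • (a ^ p * ⁅a, b⁆) ∈ intFilt F ((p + 1) * i + j - N - 1) := by
  induction p with
  | zero => simp
  | succ p ih =>
    have key : ⁅a ^ (p + 1 + 1), b⁆ - (p + 1 + 1) • (a ^ (p + 1) * ⁅a, b⁆) =
        a * (⁅a ^ (p + 1), b⁆ - (p + 1) • (a ^ p * ⁅a, b⁆)) - ⁅a ^ (p + 1), ⁅a, b⁆⁆ := by
      simp only [Ring.lie_def, pow_succ' a, succ_nsmul, mul_sub, sub_mul, mul_add, mul_assoc,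
        mul_smul_comm]
      abel
    have hcomm := hN (hF.pow_mem_intFilt ha (p + 1)) (hN ha hb)
    rw [key]
    refine sub_mem (hF.intFilt_mono ?_ (hF.mul_mem_intFilt ha ih)) (hF.intFilt_mono ?_ hcomm)
    all_goals push_cast; linarith

lemma nsmul_lie_mem_of_mul_fdeg_eq [NoZeroDivisors C] {N : ℕ} (hF : IsAlgebraFiltration F)
    (hgr : GradedRankLeOne F) (hdeg : FdegAdditive F)
    (hN0 : 0 < N) (hN : CommutatorLowersBy F N) {a b : C} (ha : a ≠ 0) (hb : b ≠ 0) {p q : ℕ}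
    (hpq : p * fdeg F a = q * fdeg F b) :
    p • ⁅a, b⁆ ∈ intFilt F (fdeg F a + fdeg F b - N - 1) := by
  obtain _ | p := p
  · simp
  have hleib :=
    lie_pow_sub_nsmul_mem hF hN0 hN (hF.mem_intFilt_fdeg a) (hF.mem_intFilt_fdeg b) p
  have hlie : ⁅a ^ (p + 1), b⁆ ∈ intFilt F (((p + 1) * fdeg F a : ℕ) + fdeg F b - N - 1) :=
    lie_mem_of_commute hF hgr hN (fdeg_pow hF hdeg ha (p + 1) ▸ hF.mem_fdeg _)
      (pow_ne_zero q hb) (by rw [fdeg_pow hF hdeg hb, hpq]) ((Commute.refl b).pow_left q)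
      (hF.mem_intFilt_fdeg b)
  have hmul : a ^ p * ((p + 1) • ⁅a, b⁆) ∈
      intFilt F (fdeg F (a ^ p) + (fdeg F a + fdeg F b - N - 1)) := by
    rw [mul_smul_comm, fdeg_pow hF hdeg ha]
    convert sub_mem hlie hleib using 2
    · push_cast; ring
    · abel
  exact mem_intFilt_of_mul_mem hF hdeg (pow_ne_zero p ha) hmul

theorem CommutatorLowersBy.succ [NoZeroDivisors C] {N : ℕ} (hF : IsAlgebraFiltration F)
    (hgr : GradedRankLeOne F) (hdeg : FdegAdditive F)
    (hN0 : 0 < N) (hN : CommutatorLowersBy F N) : CommutatorLowersBy F (N + 1) := by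
  refine commutatorLowersBy_of_fdeg hF fun a b ha hb => ?_
  obtain ⟨p, q, hcop, hpq⟩ := exists_coprime_mul_eq_mul (fdeg F a) (fdeg F b)
  have hp := nsmul_lie_mem_of_mul_fdeg_eq hF hgr hdeg hN0 hN ha hb hpq
  have hq := nsmul_lie_mem_of_mul_fdeg_eq hF hgr hdeg hN0 hN hb ha hpq.symm
  have hskew : ⁅b, a⁆ = -⁅a, b⁆ := by rw [Ring.lie_def, Ring.lie_def, neg_sub]
  rw [hskew, smul_neg, neg_mem_iff, add_comm (fdeg F b : ℤ)] at hq
  push_cast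
  exact mem_of_nsmul_mem_of_coprime hcop (by simpa [sub_sub] using hp)
    (by simpa [sub_sub] using hq)

theorem commutatorLowersBy [NoZeroDivisors C] (hF : IsAlgebraFiltration F)
    (hgr : GradedRankLeOne F) (hdeg : FdegAdditive F) (N : ℕ) : CommutatorLowersBy F N := by
  induction N with
  | zero => exact commutatorLowersBy_zero hF
  | succ N ih =>
    rcases N.eq_zero_or_pos with rfl | hN0
    · exact commutatorLowersBy_one hF hgr hdeg
    · exact ih.succ hF hgr hdeg hN0

end

/-- Bergman's commutativity criterion: a filtered algebra whose degree function
is additive on nonzero elements and whose associated graded components are at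
most one-dimensional is commutative. -/
theorem filtered_algebra_commutative_of_graded_dim_le_one {k C : Type*}
    [Field k] [Ring C] [Algebra k C]
    (F : ℕ → Submodule k C)
    (hmono : Monotone F) (hone : (1 : C) ∈ F 0)
    (hmul : ∀ i j : ℕ, ∀ a ∈ F i, ∀ b ∈ F j, a * b ∈ F (i + j))
    (hcover : ∀ a : C, ∃ i, a ∈ F i)
    (hdeg : ∀ a b : C, a ≠ 0 → b ≠ 0 → fdeg F (a * b) = fdeg F a + fdeg F b)
    (hdim0 : Module.rank k ↥(F 0) ≤ 1)
    (hdim : ∀ n : ℕ,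
      Module.rank k
        (↥(F (n + 1)) ⧸ Submodule.comap (F (n + 1)).subtype (F n)) ≤ 1) :
    ∀ a b : C, a * b = b * a := by
  intro a b
  have hF : IsAlgebraFiltration F := ⟨hmono, hone, hmul, hcover⟩
  have hgr : GradedRankLeOne F := gradedRankLeOne_of_rank_le_one hdim0 hdim
  have := noZeroDivisors_of_fdegAdditive hF hgr hdeg
  have hlie := commutatorLowersBy hF hgr hdeg (fdeg F a + fdeg F b + 1)
    (hF.mem_intFilt_fdeg a) (hF.mem_intFilt_fdeg b)
  rwa [intFilt_of_neg (by push_cast; omega), Submodule.mem_bot, Ring.lie_def, sub_eq_zero] at hlie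
end

section
/- In the coproduct monoid ⟨X⟩ * [Y] of a free monoid and a free abelian monoid, if vw = v'w' with |v| = |v'| and |w| = |w'|, then v ∼ v' and w ∼ w', where u ∼ u' means |u| = |u'| and either both u, u' lie in [Y], or writing u = p(u)u₁s(u) and u' = p(u')u₁'s(u') (with p the commuting prefix, s the commuting suffix), one has |p(u)| = |p(u')|, u₁ = u₁', and |s(u)| = |s(u')|. -/
/-- Words over `X ⊔ Y`. -/
abbrev FM (X Y : Type) := FreeMonoid (X ⊕ Y)

/-- Swapping two adjacent `Y`-letters. -/
def yRel (X Y : Type) : FM X Y → FM X Y → Prop := fun a b =>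
  ∃ (u v : FM X Y) (y₁ y₂ : Y),
    a = u * FreeMonoid.of (Sum.inr y₁) * FreeMonoid.of (Sum.inr y₂) * v ∧
    b = u * FreeMonoid.of (Sum.inr y₂) * FreeMonoid.of (Sum.inr y₁) * v

/-- The congruence generated by swaps of adjacent `Y`-letters. -/
def coCon (X Y : Type) : Con (FM X Y) := conGen (yRel X Y)

/-- The coproduct monoid `⟨X⟩ * [Y]`. -/
abbrev CoprodM (X Y : Type) := (coCon X Y).Quotient

/-- Length descends to the quotient. -/
def lenHom (X Y : Type) : CoprodM X Y →* Multiplicative ℕ :=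
  Con.lift _ (FreeMonoid.lift fun _ => Multiplicative.ofAdd 1) (by
    refine Con.conGen_le.mpr ?_
    rintro a b ⟨u, v, y₁, y₂, rfl, rfl⟩
    simp [Con.ker_rel, map_mul])

/-- Length of an element of the coproduct monoid. -/
def len {X Y : Type} (w : CoprodM X Y) : ℕ := Multiplicative.toAdd (lenHom X Y w)

/-- A monoid recording the commuting prefix and suffix. -/
inductive PS (Y : Type) where
  | pure : Multiset Y → PS Y
  | mixed : Multiset Y → Multiset Y → PS Y

def PS.mul {Y : Type} : PS Y → PS Y → PS Y
  | .pure c, .pure d => .pure (c + d)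
  | .pure c, .mixed p s => .mixed (c + p) s
  | .mixed p s, .pure d => .mixed p (s + d)
  | .mixed p _, .mixed _ s' => .mixed p s'

instance {Y : Type} : Monoid (PS Y) where
  mul := PS.mul
  one := .pure 0
  mul_assoc a b c := by
    rcases a <;> rcases b <;> rcases c <;>
      simp [(· * ·), PS.mul, add_assoc]
  one_mul a := by rcases a <;> simp [(· * ·), PS.mul]
  mul_one a := by rcases a <;> simp [(· * ·), PS.mul]

/-- The prefix/suffix data descends to the quotient. -/
def psHom (X Y : Type) : CoprodM X Y →* PS Y :=
  Con.lift _ (FreeMonoid.lift fun a =>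
      match a with
      | Sum.inl _ => PS.mixed 0 0
      | Sum.inr y => PS.pure {y}) (by
    refine Con.conGen_le.mpr ?_
    rintro a b ⟨u, v, y₁, y₂, rfl, rfl⟩
    have key : (PS.pure {y₁} : PS Y) * PS.pure {y₂} = PS.pure {y₂} * PS.pure {y₁} := by
      show PS.mul _ _ = PS.mul _ _
      simp [PS.mul, add_comm]
    simp only [Con.ker_rel, map_mul, FreeMonoid.lift_eval_of]
    rw [mul_assoc _ (PS.pure {y₁}), key, mul_assoc, ← mul_assoc, ← mul_assoc])

/-- The commuting prefix of an element, as a multiset of `Y`-variables. -/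
def pre {X Y : Type} (w : CoprodM X Y) : Multiset Y :=
  match psHom X Y w with
  | .pure c => c
  | .mixed p _ => p

/-- The commuting suffix of an element, as a multiset of `Y`-variables. -/
def suf {X Y : Type} (w : CoprodM X Y) : Multiset Y :=
  match psHom X Y w with
  | .pure c => c
  | .mixed _ s => s

/-- The canonical embedding of the free abelian monoid `[Y]` (words in `Y`). -/
def yEmb (X Y : Type) : FreeMonoid Y →* CoprodM X Y :=
  (Con.mk' (coCon X Y)).comp (FreeMonoid.map Sum.inr)

/-- An element is pure if it involves only `Y`-variables. -/
def IsPure {X Y : Type} (w : CoprodM X Y) : Prop := w ∈ MonoidHom.mrange (yEmb X Y)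

/-- The pure element of the coproduct monoid corresponding to a multiset of
`Y`-variables. -/
noncomputable def pureElt {X Y : Type} (c : Multiset Y) : CoprodM X Y :=
  yEmb X Y (FreeMonoid.ofList c.toList)

/-- The equivalence relation `∼`: equal lengths and either both pure, or equal
prefix lengths, equal middle parts and equal suffix lengths. -/
noncomputable def Sim {X Y : Type} (u v : CoprodM X Y) : Prop :=
  len u = len v ∧
  ((IsPure u ∧ IsPure v) ∨
    (¬ IsPure u ∧ ¬ IsPure v ∧
      Multiset.card (pre u) = Multiset.card (pre v) ∧
      Multiset.card (suf u) = Multiset.card (suf v) ∧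
      ∃ m : CoprodM X Y,
        u = pureElt (pre u) * m * pureElt (suf u) ∧
        v = pureElt (pre v) * m * pureElt (suf v)))

/-!
Elements of `⟨X⟩ * [Y]` have a normal form `p x c₁ x₁ ⋯ cₙ xₙ s` with multisets `p, cᵢ, s` of
`Y`-letters; these normal forms make up a monoid receiving a homomorphism from `CoprodM X Y` that
has a section. An element `v` is pure iff the commuting prefix of `vw` has at least `|v|` letters,
so `v, v'` are pure together, and likewise `w, w'` via suffixes. When `v, v'` are mixed, the normal
form of `vw` lists the blocks of `v`, then one merged block `(s(v) p(w), x)`, then the blocks of `w`;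
counting letters, `|v| = |v'|` forces the merged block to sit at the same index in both
factorizations, so the blocks of `v` and `v'`, and those of `w` and `w'`, coincide.
-/

theorem List.eq_of_append_cons_eq_of_sum_map_add_eq {α : Type*} (f : α → ℕ)
    {l l' t t' : List α} {a a' : α} {k k' : ℕ} (h : l ++ a :: t = l' ++ a' :: t')
    (hk : k < f a) (hk' : k' < f a') (hs : (l.map f).sum + k = (l'.map f).sum + k') :
    l = l' := by
  induction l generalizing l' with
  | nil =>
    cases l' with
    | nil => rfl
    | cons b r =>
      obtain ⟨rfl, -⟩ := List.cons.inj h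
      simp only [List.map_nil, List.sum_nil, List.map_cons, List.sum_cons] at hs
      omega
  | cons b r ih =>
    cases l' with
    | nil =>
      obtain ⟨rfl, -⟩ := List.cons.inj h
      simp only [List.map_nil, List.sum_nil, List.map_cons, List.sum_cons] at hs
      omega
    | cons b' r' =>
      simp only [List.cons_append, List.cons.injEq] at h
      obtain ⟨rfl, h⟩ := h
      simp only [List.map_cons, List.sum_cons] at hs
      rw [ih h (by omega)]

/-- `mixed p x l s` stands for `p x c₁ x₁ ⋯ cₙ xₙ s`, where `l = [(c₁, x₁), …, (cₙ, xₙ)]`. -/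
inductive NormalForm (X Y : Type) where
  | pure : Multiset Y → NormalForm X Y
  | mixed : Multiset Y → X → List (Multiset Y × X) → Multiset Y → NormalForm X Y

namespace NormalForm

variable {X Y : Type}

def mul : NormalForm X Y → NormalForm X Y → NormalForm X Y
  | pure c, pure d => pure (c + d)
  | pure c, mixed p x l s => mixed (c + p) x l s
  | mixed p x l s, pure d => mixed p x l (s + d)
  | mixed p x l s, mixed p' x' l' s' => mixed p x (l ++ (s + p', x') :: l') s'

instance : Monoid (NormalForm X Y) where
  mul := mul
  one := pure 0
  mul_assoc a b c := by
    rcases a <;> rcases b <;> rcases c <;> simp [(· * ·), mul, add_assoc]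
  one_mul a := by rcases a <;> simp [(· * ·), mul]
  mul_one a := by rcases a <;> simp [(· * ·), mul]

@[simp] lemma pure_mul_pure (c d : Multiset Y) :
    (pure c * pure d : NormalForm X Y) = pure (c + d) := rfl

@[simp] lemma pure_mul_mixed (c p : Multiset Y) (x : X) (l : List (Multiset Y × X))
    (s : Multiset Y) : pure c * mixed p x l s = mixed (c + p) x l s := rfl

@[simp] lemma mixed_mul_pure (p : Multiset Y) (x : X) (l : List (Multiset Y × X))
    (s d : Multiset Y) : mixed p x l s * pure d = mixed p x l (s + d) := rfl

@[simp] lemma mixed_mul_mixed (p : Multiset Y) (x : X) (l : List (Multiset Y × X))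
    (s p' : Multiset Y) (x' : X) (l' : List (Multiset Y × X)) (s' : Multiset Y) :
    mixed p x l s * mixed p' x' l' s' = mixed p x (l ++ (s + p', x') :: l') s' := rfl

def IsPure : NormalForm X Y → Prop
  | pure _ => True
  | mixed .. => False

def len : NormalForm X Y → ℕ
  | pure c => Multiset.card c
  | mixed p _ l s =>
      Multiset.card p + 1 + (l.map fun e => Multiset.card e.1 + 1).sum + Multiset.card s

def pre : NormalForm X Y → Multiset Y
  | pure c => c
  | mixed p .. => p

def suf : NormalForm X Y → Multiset Y
  | pure c => c
  | mixed _ _ _ s => s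

def Sim : NormalForm X Y → NormalForm X Y → Prop
  | pure _, pure _ => True
  | mixed p x l s, mixed p' x' l' s' =>
      Multiset.card p = Multiset.card p' ∧ x = x' ∧ l = l' ∧ Multiset.card s = Multiset.card s'
  | _, _ => False

lemma len_mul (a b : NormalForm X Y) : (a * b).len = a.len + b.len := by
  rcases a <;> rcases b <;> simp [len] <;> omega

def lenHom : NormalForm X Y →* Multiplicative ℕ where
  toFun a := .ofAdd a.len
  map_one' := rfl
  map_mul' a b := by rw [len_mul]; rfl

def toPS : NormalForm X Y →* PS Y where
  toFun
    | pure c => .pure c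
    | mixed p _ _ s => .mixed p s
  map_one' := rfl
  map_mul' a b := by rcases a <;> rcases b <;> rfl

lemma isPure_mul (a b : NormalForm X Y) : (a * b).IsPure ↔ a.IsPure ∧ b.IsPure := by
  rcases a <;> rcases b <;> simp [IsPure]

lemma isPure_iff_len_le_card_pre_mul (a b : NormalForm X Y) :
    a.IsPure ↔ a.len ≤ Multiset.card (a * b).pre := by
  rcases a <;> rcases b <;> simp [IsPure, len, pre] <;> omega

lemma isPure_iff_len_le_card_suf_mul (a b : NormalForm X Y) :
    b.IsPure ↔ b.len ≤ Multiset.card (a * b).suf := by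
  rcases a <;> rcases b <;> simp [IsPure, len, suf]

theorem sim_of_mul_eq {a b a' b' : NormalForm X Y} (h : a * b = a' * b') (ha : a.len = a'.len)
    (hb : b.len = b'.len) : a.Sim a' ∧ b.Sim b' := by
  have hpa : a.IsPure ↔ a'.IsPure := by
    rw [isPure_iff_len_le_card_pre_mul a b, isPure_iff_len_le_card_pre_mul a' b', h, ha]
  have hpb : b.IsPure ↔ b'.IsPure := by
    rw [isPure_iff_len_le_card_suf_mul a b, isPure_iff_len_le_card_suf_mul a' b', h, hb]
  rcases a with c | ⟨p, x, l, s⟩ <;> rcases a' with c' | ⟨p', x', l', s'⟩ <;>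
    rcases b with d | ⟨p₂, x₂, l₂, s₂⟩ <;> rcases b' with d' | ⟨p₂', x₂', l₂', s₂'⟩ <;>
    simp only [IsPure, iff_true, iff_false, not_true] at hpa hpb
  all_goals simp only [len, Sim, true_and, and_true, pure_mul_mixed, mixed_mul_pure,
    mixed_mul_mixed, mixed.injEq] at h ha hb ⊢
  case pure.pure.mixed.mixed =>
    obtain ⟨hp, rfl, rfl, rfl⟩ := h
    have hcard := congrArg Multiset.card hp
    rw [Multiset.card_add, Multiset.card_add] at hcard
    exact ⟨by omega, rfl, rfl, rfl⟩
  case mixed.mixed.pure.pure =>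
    obtain ⟨rfl, rfl, rfl, -⟩ := h
    exact ⟨rfl, rfl, rfl, by omega⟩
  case mixed.mixed.mixed.mixed =>
    obtain ⟨rfl, rfl, hl, rfl⟩ := h
    obtain rfl : l = l' :=
      List.eq_of_append_cons_eq_of_sum_map_add_eq (fun e => Multiset.card e.1 + 1) hl
        (k := Multiset.card s) (k' := Multiset.card s') (by simp) (by simp) (by omega)
    obtain ⟨⟨hsp, rfl⟩, rfl⟩ : (s + p₂ = s' + p₂' ∧ x₂ = x₂') ∧ l₂ = l₂' := by simpa using hl
    have hcard := congrArg Multiset.card hsp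
    rw [Multiset.card_add, Multiset.card_add] at hcard
    exact ⟨⟨rfl, rfl, rfl, by omega⟩, by omega, rfl, rfl, rfl⟩

end NormalForm

section CoprodM

variable {X Y : Type}

abbrev CoprodM.of (a : X ⊕ Y) : CoprodM X Y := ((FreeMonoid.of a : FM X Y) : CoprodM X Y)

theorem CoprodM.hom_ext {M : Type*} [Monoid M] {f g : CoprodM X Y →* M}
    (h : ∀ a, f (CoprodM.of a) = g (CoprodM.of a)) : f = g :=
  Con.hom_ext (FreeMonoid.hom_eq h)

def NormalForm.ofLetter : X ⊕ Y → NormalForm X Y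
  | .inl x => .mixed 0 x [] 0
  | .inr y => .pure {y}

def toNormalForm (X Y : Type) : CoprodM X Y →* NormalForm X Y :=
  Con.lift _ (FreeMonoid.lift NormalForm.ofLetter) <| Con.conGen_le.mpr <| by
    rintro a b ⟨u, v, y₁, y₂, rfl, rfl⟩
    simp only [Con.ker_rel, map_mul, FreeMonoid.lift_eval_of, NormalForm.ofLetter]
    have hswap :
        (NormalForm.pure {y₁} : NormalForm X Y) * .pure {y₂} = .pure {y₂} * .pure {y₁} := by
      rw [NormalForm.pure_mul_pure, NormalForm.pure_mul_pure, add_comm]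
    rw [mul_assoc _ (NormalForm.pure {y₁}), hswap, ← mul_assoc]

@[simp] theorem toNormalForm_of (a : X ⊕ Y) :
    toNormalForm X Y (CoprodM.of a) = NormalForm.ofLetter a :=
  rfl

theorem len_eq_len_toNormalForm (u : CoprodM X Y) : len u = (toNormalForm X Y u).len := by
  have : lenHom X Y = NormalForm.lenHom.comp (toNormalForm X Y) :=
    CoprodM.hom_ext (by rintro (x | y) <;> rfl)
  rw [len, this]
  rfl

theorem psHom_eq : psHom X Y = NormalForm.toPS.comp (toNormalForm X Y) :=
  CoprodM.hom_ext (by rintro (x | y) <;> rfl)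

theorem pre_eq_pre_toNormalForm (u : CoprodM X Y) : pre u = (toNormalForm X Y u).pre := by
  rw [pre, psHom_eq, MonoidHom.comp_apply]
  cases toNormalForm X Y u <;> rfl

theorem suf_eq_suf_toNormalForm (u : CoprodM X Y) : suf u = (toNormalForm X Y u).suf := by
  rw [suf, psHom_eq, MonoidHom.comp_apply]
  cases toNormalForm X Y u <;> rfl

theorem yEmb_ofList_eq_of_perm {l l' : List Y} (h : l.Perm l') :
    yEmb X Y (FreeMonoid.ofList l) = yEmb X Y (FreeMonoid.ofList l') := by
  induction h with
  | nil => rfl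
  | cons a _ ih => simp only [FreeMonoid.ofList_cons, map_mul, ih]
  | swap a b t =>
    exact (Con.eq _).mpr <| ConGen.Rel.of _ _
      ⟨1, FreeMonoid.map Sum.inr (FreeMonoid.ofList t), b, a, rfl, rfl⟩
  | trans _ _ ih₁ ih₂ => exact ih₁.trans ih₂

@[simp] theorem pureElt_zero : (pureElt 0 : CoprodM X Y) = 1 := by
  simp [pureElt]

@[simp] theorem pureElt_add (c d : Multiset Y) :
    (pureElt (c + d) : CoprodM X Y) = pureElt c * pureElt d := by
  rw [pureElt, pureElt, pureElt, ← map_mul, ← FreeMonoid.ofList_append]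
  apply yEmb_ofList_eq_of_perm
  rw [← Multiset.coe_eq_coe, ← Multiset.coe_add, Multiset.coe_toList, Multiset.coe_toList,
    Multiset.coe_toList]

theorem pureElt_singleton (y : Y) : (pureElt {y} : CoprodM X Y) = CoprodM.of (.inr y) := by
  rw [pureElt, Multiset.toList_singleton]
  rfl

namespace NormalForm

noncomputable def eval : NormalForm X Y →* CoprodM X Y where
  toFun
    | pure c => pureElt c
    | mixed p x l s => pureElt p * CoprodM.of (.inl x) *
        (l.map fun e => pureElt e.1 * CoprodM.of (.inl e.2)).prod * pureElt s
  map_one' := pureElt_zero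
  map_mul' a b := by
    rcases a <;> rcases b <;> simp [mul_assoc]

theorem eval_mixed (p : Multiset Y) (x : X) (l : List (Multiset Y × X)) (s : Multiset Y) :
    eval (mixed p x l s) = pureElt p * eval (mixed 0 x l 0) * pureElt s := by
  simp [eval, mul_assoc]

end NormalForm

theorem eval_toNormalForm (u : CoprodM X Y) : (toNormalForm X Y u).eval = u := by
  have : NormalForm.eval.comp (toNormalForm X Y) = MonoidHom.id _ :=
    CoprodM.hom_ext (by
      rintro (x | y) <;> simp [NormalForm.ofLetter, NormalForm.eval, pureElt_singleton])
  exact DFunLike.congr_fun this u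

theorem isPure_iff_isPure_toNormalForm (u : CoprodM X Y) :
    IsPure u ↔ (toNormalForm X Y u).IsPure := by
  constructor
  · rintro ⟨g, rfl⟩
    induction g with
    | one => trivial
    | of y => trivial
    | mul g₁ g₂ ih₁ ih₂ =>
      rw [map_mul, map_mul, NormalForm.isPure_mul]
      exact ⟨ih₁, ih₂⟩
  · intro hpure
    rw [← eval_toNormalForm u]
    generalize toNormalForm X Y u = a at hpure ⊢
    cases a with
    | pure c => exact ⟨_, rfl⟩
    | mixed => simp [NormalForm.IsPure] at hpure

theorem sim_of_sim_toNormalForm {u u' : CoprodM X Y} (hlen : len u = len u')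
    (h : (toNormalForm X Y u).Sim (toNormalForm X Y u')) : Sim u u' := by
  refine ⟨hlen, ?_⟩
  rw [isPure_iff_isPure_toNormalForm, isPure_iff_isPure_toNormalForm, pre_eq_pre_toNormalForm,
    pre_eq_pre_toNormalForm, suf_eq_suf_toNormalForm, suf_eq_suf_toNormalForm]
  have hu := eval_toNormalForm u
  have hu' := eval_toNormalForm u'
  generalize toNormalForm X Y u = a at *
  generalize toNormalForm X Y u' = a' at *
  rcases a with c | ⟨p, x, l, s⟩ <;> rcases a' with c' | ⟨p', x', l', s'⟩ <;>
    simp only [NormalForm.Sim] at h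
  · exact .inl ⟨trivial, trivial⟩
  · obtain ⟨hp, rfl, rfl, hs⟩ := h
    refine .inr ⟨id, id, hp, hs, NormalForm.eval (.mixed 0 x l 0), ?_, ?_⟩
    · rw [← hu, NormalForm.eval_mixed]; rfl
    · rw [← hu', NormalForm.eval_mixed]; rfl

end CoprodM

/-- Lemma 3.5(i): if `vw = v'w'` with `|v| = |v'|` and `|w| = |w'|`, then
`v ∼ v'` and `w ∼ w'`. -/
theorem coprodM_sim_of_mul_eq {X Y : Type} (v w v' w' : CoprodM X Y)
    (h : v * w = v' * w') (hv : len v = len v') (hw : len w = len w') :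
    Sim v v' ∧ Sim w w' := by
  have hnf : toNormalForm X Y v * toNormalForm X Y w
      = toNormalForm X Y v' * toNormalForm X Y w' := by
    rw [← map_mul, ← map_mul, h]
  obtain ⟨hsv, hsw⟩ := NormalForm.sim_of_mul_eq hnf
    (by rwa [← len_eq_len_toNormalForm, ← len_eq_len_toNormalForm])
    (by rwa [← len_eq_len_toNormalForm, ← len_eq_len_toNormalForm])
  exact ⟨sim_of_sim_toNormalForm hv hsv, sim_of_sim_toNormalForm hw hsw⟩
end
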